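/- arXiv:2407.08361 — 2 statements merged into one kernel-verified Lean document; each statement's English description precedes it below -/
import Mathlib

section
/- Let s : [0,∞) → ℝⁿ be a continuously differentiable trajectory with s(0) = x₀ and s(t) → 0 as t → ∞, such that Γ₁ := ∫₀^∞ ṡ(t) s(t)ᵀ dt and Γ₂ := ∫₀^∞ s(t) s(t)ᵀ dt converge and Γ₂ is positive definite. Then with Â := Γ₁Γ₂⁻¹, the symmetric matrix ÂΓ₂ + Γ₂Âᵀ = −x₀x₀ᵀ is negative semidefinite. -/
open Matrix MeasureTheory Filter

/-! Differentiating `s sᵀ` and integrating over `[0, ∞)` gives `Γ₁ + Γ₁ᵀ = [s sᵀ]₀^∞ = -x₀ x₀ᵀ`,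
since `s → 0`. As `Γ₂` is symmetric and invertible, `Â Γ₂ + Γ₂ Âᵀ` is exactly `Γ₁ + Γ₁ᵀ`,
and the rank-one matrix `x₀ x₀ᵀ` is positive semidefinite. -/

theorem integral_Ioi_deriv_mul_add_integral_Ioi_mul_deriv {u v u' v' : ℝ → ℝ} {a : ℝ}
    (hu : ∀ x ∈ Set.Ici a, HasDerivAt u (u' x) x) (hv : ∀ x ∈ Set.Ici a, HasDerivAt v (v' x) x)
    (hu'v : IntegrableOn (fun x => u' x * v x) (Set.Ioi a))
    (huv' : IntegrableOn (fun x => u x * v' x) (Set.Ioi a))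
    (h_infty : Tendsto (fun x => u x * v x) atTop (nhds 0)) :
    (∫ x in Set.Ioi a, u' x * v x) + ∫ x in Set.Ioi a, u x * v' x = -(u a * v a) := by
  have h_zero : Tendsto (u * v) (nhdsWithin a (Set.Ioi a)) (nhds (u a * v a)) :=
    (((hu a Set.self_mem_Ici).continuousAt.mul (hv a Set.self_mem_Ici).continuousAt).tendsto).mono_left
      nhdsWithin_le_nhds
  rw [integral_Ioi_mul_deriv_eq_deriv_mul (fun x hx => hu x (Set.Ioi_subset_Ici_self hx))
    (fun x hx => hv x (Set.Ioi_subset_Ici_self hx)) huv' hu'v h_zero h_infty]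
  ring

theorem cross_moment_add_transpose_eq_neg_vecMulVec {ι : Type*} [Fintype ι]
    {s s' : ℝ → ι → ℝ} {a : ℝ} (hderiv : ∀ t ∈ Set.Ici a, HasDerivAt s (s' t) t)
    (hlim : Tendsto s atTop (nhds 0)) (Γ : Matrix ι ι ℝ)
    (hΓ : ∀ i j, Γ i j = ∫ t in Set.Ici a, s' t i * s t j)
    (hint : ∀ i j, IntegrableOn (fun t => s' t i * s t j) (Set.Ici a)) :
    Γ + Γᵀ = -vecMulVec (s a) (s a) := by
  ext i j
  have hcoord (k : ι) (t : ℝ) (ht : t ∈ Set.Ici a) : HasDerivAt (fun u => s u k) (s' t k) t :=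
    hasDerivAt_pi.1 (hderiv t ht) k
  have hlim_coord (k : ι) : Tendsto (fun t => s t k) atTop (nhds 0) :=
    tendsto_pi_nhds.1 hlim k
  have hint_swap : IntegrableOn (fun t => s t i * s' t j) (Set.Ioi a) :=
    ((hint j i).mono_set Set.Ioi_subset_Ici_self).congr_fun (fun t _ => mul_comm _ _)
      measurableSet_Ioi
  have h_infty : Tendsto (fun t => s t i * s t j) atTop (nhds 0) := by
    simpa using (hlim_coord i).mul (hlim_coord j)
  simp only [Matrix.add_apply, transpose_apply, Matrix.neg_apply, vecMulVec_apply, hΓ,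
    integral_Ici_eq_integral_Ioi]
  simp_rw [mul_comm (s' _ j) (s _ i)]
  exact integral_Ioi_deriv_mul_add_integral_Ioi_mul_deriv (hcoord i) (hcoord j)
    ((hint i j).mono_set Set.Ioi_subset_Ici_self) hint_swap h_infty

theorem Matrix.mul_inv_mul_add_mul_transpose_mul_inv {ι R : Type*} [Fintype ι] [DecidableEq ι]
    [CommRing R] (A B : Matrix ι ι R) (hB : B.IsSymm) (hdet : IsUnit B.det) :
    A * B⁻¹ * B + B * (A * B⁻¹)ᵀ = A + Aᵀ := by
  rw [transpose_mul, transpose_nonsing_inv, hB.eq, ← mul_assoc, mul_nonsing_inv _ hdet,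
    nonsing_inv_mul_cancel_right _ _ hdet, one_mul]

theorem lyapunov_identity_from_trajectory_general
    {n : ℕ} (s s' : ℝ → Fin n → ℝ) (x₀ : Fin n → ℝ)
    (hderiv : ∀ t : ℝ, HasDerivAt s (s' t) t)
    (hs0 : s 0 = x₀)
    (hlim : Tendsto s atTop (nhds 0))
    (Γ₁ Γ₂ : Matrix (Fin n) (Fin n) ℝ)
    (hΓ₁ : ∀ i j, Γ₁ i j = ∫ t in Set.Ici (0:ℝ), s' t i * s t j)
    (hint₁ : ∀ i j, IntegrableOn (fun t => s' t i * s t j) (Set.Ici (0:ℝ)))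
    (hpd : Γ₂.PosDef) :
    (Γ₁ * Γ₂⁻¹) * Γ₂ + Γ₂ * (Γ₁ * Γ₂⁻¹)ᵀ = -(vecMulVec x₀ x₀) ∧
    (-((Γ₁ * Γ₂⁻¹) * Γ₂ + Γ₂ * (Γ₁ * Γ₂⁻¹)ᵀ)).PosSemidef := by
  have hsymm : Γ₂.IsSymm := by simpa [IsSymm] using hpd.isHermitian.eq
  have hdet : IsUnit Γ₂.det := hpd.det_pos.ne'.isUnit
  have hlyap : (Γ₁ * Γ₂⁻¹) * Γ₂ + Γ₂ * (Γ₁ * Γ₂⁻¹)ᵀ = -(vecMulVec x₀ x₀) := by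
    rw [mul_inv_mul_add_mul_transpose_mul_inv _ _ hsymm hdet, ← hs0]
    exact cross_moment_add_transpose_eq_neg_vecMulVec (fun t _ => hderiv t) hlim Γ₁ hΓ₁ hint₁
  refine ⟨hlyap, ?_⟩
  rw [hlyap, neg_neg]
  simpa using posSemidef_vecMulVec_self_star x₀

theorem lyapunov_identity_from_trajectory
    {n : ℕ} (s s' : ℝ → Fin n → ℝ) (x₀ : Fin n → ℝ)
    (hderiv : ∀ t : ℝ, HasDerivAt s (s' t) t)
    (hs0 : s 0 = x₀)
    (hlim : Tendsto s atTop (nhds 0))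
    (Γ₁ Γ₂ : Matrix (Fin n) (Fin n) ℝ)
    (hΓ₁ : ∀ i j, Γ₁ i j = ∫ t in Set.Ici (0:ℝ), s' t i * s t j)
    (hΓ₂ : ∀ i j, Γ₂ i j = ∫ t in Set.Ici (0:ℝ), s t i * s t j)
    (hint₁ : ∀ i j, IntegrableOn (fun t => s' t i * s t j) (Set.Ici (0:ℝ)))
    (hint₂ : ∀ i j, IntegrableOn (fun t => s t i * s t j) (Set.Ici (0:ℝ)))
    (hpd : Γ₂.PosDef) :
    (Γ₁ * Γ₂⁻¹) * Γ₂ + Γ₂ * (Γ₁ * Γ₂⁻¹)ᵀ = -(vecMulVec x₀ x₀) ∧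
    (-((Γ₁ * Γ₂⁻¹) * Γ₂ + Γ₂ * (Γ₁ * Γ₂⁻¹)ᵀ)).PosSemidef :=
  lyapunov_identity_from_trajectory_general s s' x₀ hderiv hs0 hlim Γ₁ Γ₂ hΓ₁ hint₁ hpd
end

section
/- Let Â be an n×n real matrix, P ≻ 0 a positive definite matrix, and x₀ ∈ ℝⁿ such that ÂP + PÂᵀ = −x₀x₀ᵀ. If the pair (Âᵀ, x₀ᵀ) is observable (i.e., the only vector v satisfying x₀ᵀ(Âᵀ)^k v = 0 for all k = 0,…,n−1 is v = 0), then Â is Hurwitz: every eigenvalue of Â has strictly negative real part. -/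
/-!
Let `v ≠ 0` be a complex eigenvector of `Âᵀ` for `μ`, i.e. a left eigenvector of `Â`. Pairing
the Lyapunov equation with `v` gives `2 Re μ · v*Pv = -|x₀ᵀv|²` with `v*Pv > 0`, so `Re μ ≤ 0`,
and `Re μ = 0` forces `x₀ᵀv = 0`. Then `x₀ᵀ(Âᵀ)ᵏv = μᵏ x₀ᵀv = 0` for every `k`, so the real and
imaginary parts of `v` are unobservable, contradicting observability.
-/

open Matrix

section Spectrum

variable {K ι : Type*} [Field K] [Fintype ι] [DecidableEq ι]

theorem Matrix.spectrum_transpose (A : Matrix ι ι K) : spectrum K Aᵀ = spectrum K A := by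
  ext μ
  rw [mem_spectrum_iff_isRoot_charpoly, mem_spectrum_iff_isRoot_charpoly, charpoly_transpose]

theorem Matrix.exists_mulVec_eq_smul_of_mem_spectrum {A : Matrix ι ι K} {μ : K}
    (hμ : μ ∈ spectrum K A) : ∃ v ≠ 0, A *ᵥ v = μ • v := by
  rw [← spectrum_toLin', ← Module.End.hasEigenvalue_iff_mem_spectrum] at hμ
  obtain ⟨v, hv⟩ := hμ.exists_hasEigenvector
  exact ⟨v, hv.2, hv.apply_eq_smul⟩

end Spectrum

theorem Matrix.pow_mulVec_eq_smul {R ι : Type*} [CommSemiring R] [Fintype ι] [DecidableEq ι]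
    {A : Matrix ι ι R} {v : ι → R} {μ : R} (h : A *ᵥ v = μ • v) (k : ℕ) :
    (A ^ k) *ᵥ v = μ ^ k • v := by
  induction k with
  | zero => simp
  | succ k ih => rw [pow_succ', ← mulVec_mulVec, ih, mulVec_smul, h, smul_smul, pow_succ]

section Lyapunov

variable {𝕜 ι : Type*} [RCLike 𝕜] [Fintype ι]

open RCLike ComplexOrder ComplexConjugate in
theorem re_lt_zero_or_dotProduct_eq_zero_of_lyapunov {A Q : Matrix ι ι 𝕜} {x v : ι → 𝕜} {μ : 𝕜}
    (hQ : Q.PosDef) (hL : A * Q + Q * Aᴴ = -vecMulVec x (star x)) (hv : v ≠ 0)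
    (hAv : Aᴴ *ᵥ v = μ • v) : re μ < 0 ∨ star x ⬝ᵥ v = 0 := by
  set p := star v ⬝ᵥ (Q *ᵥ v)
  set c := star x ⬝ᵥ v
  have hvA : star v ᵥ* A = conj μ • star v := by
    simpa [star_mulVec, star_smul] using congrArg star hAv
  have hlhs : star v ⬝ᵥ ((A * Q + Q * Aᴴ) *ᵥ v) = (conj μ + μ) * p := by
    rw [add_mulVec, dotProduct_add, ← mulVec_mulVec, ← mulVec_mulVec, hAv, dotProduct_mulVec, hvA,
      mulVec_smul, smul_dotProduct, dotProduct_smul, smul_eq_mul, smul_eq_mul, add_mul]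
  have hrhs : star v ⬝ᵥ (vecMulVec x (star x) *ᵥ v) = conj c * c := by
    rw [vecMulVec_mulVec, dotProduct_smul, MulOpposite.smul_eq_mul_unop, MulOpposite.unop_op,
      star_dotProduct v x]
    rfl
  have hp : 0 < re p := (RCLike.pos_iff.mp (hQ.dotProduct_mulVec_pos hv)).1
  have key : 2 * re μ * re p = -‖c‖ ^ 2 := by
    have := hlhs.symm.trans (by rw [hL, neg_mulVec, dotProduct_neg, hrhs])
    rw [add_comm, add_conj, RCLike.conj_mul] at this
    simpa [mul_assoc] using congrArg re this
  refine (lt_or_ge (re μ) 0).imp id fun hμ => norm_eq_zero.mp ?_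
  exact (pow_eq_zero_iff two_ne_zero).mp (le_antisymm (by nlinarith) (by positivity))

end Lyapunov

theorem Complex.pi_eq_zero_iff {ι : Type*} {v : ι → ℂ} : v = 0 ↔ re ∘ v = 0 ∧ im ∘ v = 0 := by
  simp [funext_iff, Complex.ext_iff, forall_and]

section Complexification

variable {ι : Type*} [Fintype ι]

theorem Matrix.re_star_dotProduct_map_ofReal_mulVec (P : Matrix ι ι ℝ) (v : ι → ℂ) :
    (star v ⬝ᵥ (P.map Complex.ofReal *ᵥ v)).re =
      (Complex.re ∘ v) ⬝ᵥ P *ᵥ (Complex.re ∘ v) + (Complex.im ∘ v) ⬝ᵥ P *ᵥ (Complex.im ∘ v) := by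
  simp [dotProduct, mulVec, Complex.re_sum, Finset.mul_sum, ← Finset.sum_add_distrib]

open ComplexOrder in
theorem Matrix.PosDef.map_ofReal {P : Matrix ι ι ℝ} (hP : P.PosDef) :
    (P.map Complex.ofReal).PosDef := by
  have hPc : (P.map Complex.ofReal).IsHermitian :=
    hP.isHermitian.map _ fun r => (Complex.conj_ofReal r).symm
  refine .of_dotProduct_mulVec_pos hPc fun v hv => Complex.pos_iff.mpr
    ⟨?_, (hPc.im_star_dotProduct_mulVec_self v).symm⟩
  have hnonneg (w : ι → ℝ) : 0 ≤ w ⬝ᵥ P *ᵥ w := by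
    simpa using hP.posSemidef.dotProduct_mulVec_nonneg w
  have hpos {w : ι → ℝ} (hw : w ≠ 0) : 0 < w ⬝ᵥ P *ᵥ w := by
    simpa using hP.dotProduct_mulVec_pos hw
  rw [re_star_dotProduct_map_ofReal_mulVec]
  by_cases hre : Complex.re ∘ v = 0
  · have him : Complex.im ∘ v ≠ 0 := fun him => hv (Complex.pi_eq_zero_iff.mpr ⟨hre, him⟩)
    linarith [hnonneg (Complex.re ∘ v), hpos him]
  · linarith [hpos hre, hnonneg (Complex.im ∘ v)]

theorem Matrix.re_ofReal_dotProduct_map_ofReal_mulVec (x : ι → ℝ) (M : Matrix ι ι ℝ)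
    (v : ι → ℂ) :
    ((Complex.ofReal ∘ x) ⬝ᵥ M.map Complex.ofReal *ᵥ v).re = x ⬝ᵥ M *ᵥ (Complex.re ∘ v) := by
  simp [dotProduct, mulVec, Complex.re_sum, Finset.mul_sum]

theorem Matrix.im_ofReal_dotProduct_map_ofReal_mulVec (x : ι → ℝ) (M : Matrix ι ι ℝ)
    (v : ι → ℂ) :
    ((Complex.ofReal ∘ x) ⬝ᵥ M.map Complex.ofReal *ᵥ v).im = x ⬝ᵥ M *ᵥ (Complex.im ∘ v) := by
  simp [dotProduct, mulVec, Complex.im_sum, Finset.mul_sum]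

end Complexification

def IsObservable {R : Type*} [Semiring R] {n : ℕ} (A : Matrix (Fin n) (Fin n) R)
    (c : Fin n → R) : Prop :=
  ∀ v, (∀ k < n, c ⬝ᵥ (A ^ k) *ᵥ v = 0) → v = 0

theorem IsObservable.dotProduct_ne_zero_of_mulVec_eq_smul {R : Type*} [CommSemiring R] {n : ℕ}
    {A : Matrix (Fin n) (Fin n) R} {c v : Fin n → R} {μ : R} (hobs : IsObservable A c)
    (hv : v ≠ 0) (hAv : A *ᵥ v = μ • v) : c ⬝ᵥ v ≠ 0 := fun hc =>
  hv <| hobs v fun k _ => by rw [pow_mulVec_eq_smul hAv, dotProduct_smul, hc, smul_zero]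

theorem IsObservable.map_ofReal {n : ℕ} {A : Matrix (Fin n) (Fin n) ℝ} {c : Fin n → ℝ}
    (hobs : IsObservable A c) : IsObservable (A.map Complex.ofReal) (Complex.ofReal ∘ c) := by
  intro v hv
  have hpow (k : ℕ) : A.map Complex.ofReal ^ k = (A ^ k).map Complex.ofReal :=
    (map_pow Complex.ofRealHom.mapMatrix A k).symm
  have hre : Complex.re ∘ v = 0 := hobs _ fun k hk => by
    rw [← re_ofReal_dotProduct_map_ofReal_mulVec, ← hpow, hv k hk, Complex.zero_re]
  have him : Complex.im ∘ v = 0 := hobs _ fun k hk => by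
    rw [← im_ofReal_dotProduct_map_ofReal_mulVec, ← hpow, hv k hk, Complex.zero_im]
  exact Complex.pi_eq_zero_iff.mpr ⟨hre, him⟩

theorem hurwitz_of_observable
    {n : ℕ} (Ahat P : Matrix (Fin n) (Fin n) ℝ) (x₀ : Fin n → ℝ)
    (hP : P.PosDef)
    (hLyap : Ahat * P + P * Ahatᵀ = -(vecMulVec x₀ x₀))
    (hobs : ∀ v : Fin n → ℝ,
      (∀ k : ℕ, k < n → x₀ ⬝ᵥ ((Ahatᵀ) ^ k).mulVec v = 0) → v = 0) :
    ∀ μ ∈ spectrum ℂ (Ahat.map (Complex.ofReal ·)), μ.re < 0 := by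
  intro μ hμ
  set A := Ahat.map Complex.ofReal
  set x := Complex.ofReal ∘ x₀
  have hAH : Aᴴ = Ahatᵀ.map Complex.ofReal := by ext; simp [A]
  have hx : star x = x := by ext; simp [x]
  have hL : A * P.map Complex.ofReal + P.map Complex.ofReal * Aᴴ = -vecMulVec x (star x) := by
    have hxx : Complex.ofRealHom.mapMatrix (vecMulVec x₀ x₀) = vecMulVec x x := by
      ext; simp [x, vecMulVec_apply]
    have hmap := congrArg Complex.ofRealHom.mapMatrix hLyap
    rw [map_add, map_mul, map_mul, map_neg, hxx] at hmap
    rwa [hAH, hx]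
  obtain ⟨v, hv, hAv⟩ : ∃ v ≠ 0, Aᴴ *ᵥ v = μ • v :=
    exists_mulVec_eq_smul_of_mem_spectrum (by rwa [hAH, transpose_map, spectrum_transpose])
  have hobsC : IsObservable Aᴴ (star x) := by
    rw [hAH, hx]
    exact IsObservable.map_ofReal hobs
  exact (re_lt_zero_or_dotProduct_eq_zero_of_lyapunov hP.map_ofReal hL hv hAv).resolve_right
    (hobsC.dotProduct_ne_zero_of_mulVec_eq_smul hv hAv)
end
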